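/- arXiv:1306.5867 — 3 statements merged into one kernel-verified Lean document; each statement's English description precedes it below -/
import Mathlib

section
/- Let G be an abelian group, A a G-graded ring, and H a subgroup of G of finite index. If I and I′ are two complete sets of representatives of the cosets of H in G, then the ring A^{[H]} constructed from I is isomorphic (as a ring) to the ring A^{[H]} constructed from I′; that is, the ring structure of A^{[H]} does not depend on the choice of the set of representatives. -/
set_option synthInstance.maxHeartbeats 1000000
set_option maxHeartbeats 1000000

/-! ## Graded rings presented by families of additive subgroups -/

/-- A family `𝒜 : G → AddSubgroup A` is a `G`-grading of the ring `A` if `A = ⊕_g 𝒜_g`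
internally, `1 ∈ 𝒜_0` and `𝒜_g · 𝒜_{g'} ⊆ 𝒜_{g+g'}`. -/
structure IsGrading {G : Type*} [AddCommGroup G] [DecidableEq G] {A : Type*} [Ring A]
    (𝒜 : G → AddSubgroup A) : Prop where
  internal : DirectSum.IsInternal 𝒜
  one_mem : (1 : A) ∈ 𝒜 0
  mul_mem : ∀ {g g' : G} {x y : A}, x ∈ 𝒜 g → y ∈ 𝒜 g' → x * y ∈ 𝒜 (g + g')

section CosetPiece

variable {G : Type*} [AddCommGroup G] {B : Type*} [AddCommGroup B]
  (ℬ : G → AddSubgroup B) (H : AddSubgroup G)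

/-- The subgroup `⊕_{h ∈ H} ℬ_{g+h}` of components supported on the coset `g + H`. -/
def cosetPiece (g : G) : AddSubgroup B := ⨆ h : H, ℬ (g + h)

lemma mem_cosetPiece_of_mem {g : G} (h : H) {x : B} (hx : x ∈ ℬ (g + h)) :
    x ∈ cosetPiece ℬ H g :=
  (le_iSup (fun h : H => ℬ (g + (h : G))) h) hx

end CosetPiece

section CosetPieceMul

variable {G : Type*} [AddCommGroup G] [DecidableEq G] {A : Type*} [Ring A]
  (𝒜 : G → AddSubgroup A) (H : AddSubgroup G)

lemma mul_mem_cosetPiece (hA : IsGrading 𝒜) {g g' : G} {x y : A}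
    (hx : x ∈ cosetPiece 𝒜 H g) (hy : y ∈ cosetPiece 𝒜 H g') :
    x * y ∈ cosetPiece 𝒜 H (g + g') := by
  refine AddSubgroup.iSup_induction (C := fun x => x * y ∈ cosetPiece 𝒜 H (g + g')) _ hx
    (fun h x hx => ?_) (by simpa using zero_mem _) (fun a b ha hb => by
      simpa [add_mul] using add_mem ha hb)
  refine AddSubgroup.iSup_induction (C := fun y => x * y ∈ cosetPiece 𝒜 H (g + g')) _ hy
    (fun h' y hy => ?_) (by simpa using zero_mem _) (fun a b ha hb => by
      simpa [mul_add] using add_mem ha hb)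
  refine mem_cosetPiece_of_mem 𝒜 H (h + h') ?_
  have := hA.mul_mem hx hy
  have heq : (g + h) + (g' + h') = (g + g') + ((h + h' : H) : G) := by
    push_cast; abel
  rwa [heq] at this

variable {M : Type*} [AddCommGroup M] [Module A M]

lemma smul_mem_cosetPiece (ℳ : G → AddSubgroup M)
    (hsmul : ∀ {g g' : G} {x : A} {m : M}, x ∈ 𝒜 g → m ∈ ℳ g' → x • m ∈ ℳ (g + g'))
    {g g' : G} {x : A} {m : M}
    (hx : x ∈ cosetPiece 𝒜 H g) (hm : m ∈ cosetPiece ℳ H g') :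
    x • m ∈ cosetPiece ℳ H (g + g') := by
  refine AddSubgroup.iSup_induction (C := fun x => x • m ∈ cosetPiece ℳ H (g + g')) _ hx
    (fun h x hx => ?_) (by simpa [zero_smul] using zero_mem _) (fun a b ha hb => by
      simpa [add_smul] using add_mem ha hb)
  refine AddSubgroup.iSup_induction (C := fun m => x • m ∈ cosetPiece ℳ H (g + g')) _ hm
    (fun h' m hm => ?_) (by simpa [smul_zero] using zero_mem _) (fun a b ha hb => by
      simpa [smul_add] using add_mem ha hb)
  refine mem_cosetPiece_of_mem ℳ H (h + h') ?_
  have := hsmul hx hm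
  have heq : (g + h) + (g' + h') = (g + g') + ((h + h' : H) : G) := by
    push_cast; abel
  rwa [heq] at this

end CosetPieceMul

section MatRing

variable {G : Type*} [AddCommGroup G] [DecidableEq G] {A : Type*} [Ring A]
  (𝒜 : G → AddSubgroup A) (H : AddSubgroup G) [Fintype (G ⧸ H)] [DecidableEq (G ⧸ H)]
  (ρ : G ⧸ H → G)

/-- The ring `A^{[H]}`, realized as the subring of the matrix ring over `A` with rows and
columns indexed by (the chosen representatives `ρ` of) `G/H`, whose `(i, j)` entry lies in
`⊕_{h ∈ H} 𝒜_{ρ(i) − ρ(j) + h}`. -/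
def matHRing (hA : IsGrading 𝒜) : Subring (Matrix (G ⧸ H) (G ⧸ H) A) where
  carrier := {m | ∀ i j, m i j ∈ cosetPiece 𝒜 H (ρ i - ρ j)}
  zero_mem' := fun i j => zero_mem _
  add_mem' := fun h h' i j => add_mem (h i j) (h' i j)
  neg_mem' := fun h i j => neg_mem (h i j)
  one_mem' := by
    intro i j
    by_cases hij : i = j
    · subst hij
      rw [Matrix.one_apply_eq]
      refine mem_cosetPiece_of_mem 𝒜 H 0 ?_
      simpa using hA.one_mem
    · rw [Matrix.one_apply_ne hij]
      exact zero_mem _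
  mul_mem' := by
    intro m m' hm hm' i j
    rw [Matrix.mul_apply]
    refine AddSubgroup.sum_mem _ fun l _ => ?_
    have := mul_mem_cosetPiece 𝒜 H hA (hm i l) (hm' l j)
    rwa [sub_add_sub_cancel] at this

/-- The degree-`h` component of `A^{[H]}` (`h ∈ H`): matrices whose `(i, j)` entry lies
in `𝒜_{ρ(i) − ρ(j) + h}`. -/
def matHGrading (hA : IsGrading 𝒜) (h : H) : AddSubgroup (matHRing 𝒜 H ρ hA) where
  carrier := {m | ∀ i j, (m : Matrix (G ⧸ H) (G ⧸ H) A) i j ∈ 𝒜 (ρ i - ρ j + h)}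
  zero_mem' := fun i j => zero_mem _
  add_mem' := fun {a b} ha hb i j => add_mem (ha i j) (hb i j)
  neg_mem' := fun {a} ha i j => neg_mem (ha i j)

end MatRing


lemma cosetPiece_congr {G : Type*} [AddCommGroup G] {B : Type*} [AddCommGroup B]
    (ℬ : G → AddSubgroup B) (H : AddSubgroup G) {g g' : G} (hgg : g' - g ∈ H) :
    cosetPiece ℬ H g = cosetPiece ℬ H g' := by
  have key : ∀ (a b : G), b - a ∈ H → cosetPiece ℬ H a ≤ cosetPiece ℬ H b := by
    intro a b hab
    refine iSup_le fun h => ?_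
    have : a + (h : G) = b + ((h - ⟨b - a, hab⟩ : H) : G) := by
      push_cast; abel
    rw [this]
    exact le_iSup (fun h : H => ℬ (b + (h : G))) _
  exact le_antisymm (key _ _ hgg) (key _ _ (by simpa using neg_mem hgg))

/-- **Statement 1.** The ring `A^{[H]}` does not depend on the choice of the complete
set of representatives: if `ρ` and `ρ'` are two complete sets of representatives of the
cosets of `H` in `G`, the resulting rings are isomorphic. -/
theorem statement_1 (G : Type*) [AddCommGroup G] [DecidableEq G] (A : Type*) [Ring A]
    (𝒜 : G → AddSubgroup A) (hA : IsGrading 𝒜)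
    (H : AddSubgroup G) [Fintype (G ⧸ H)] [DecidableEq (G ⧸ H)]
    (ρ ρ' : G ⧸ H → G)
    (hρ : ∀ q : G ⧸ H, (QuotientAddGroup.mk (ρ q) : G ⧸ H) = q)
    (hρ' : ∀ q : G ⧸ H, (QuotientAddGroup.mk (ρ' q) : G ⧸ H) = q) :
    Nonempty (matHRing 𝒜 H ρ hA ≃+* matHRing 𝒜 H ρ' hA) := by
  have hmem : ∀ q : G ⧸ H, ρ' q - ρ q ∈ H := by
    intro q
    have : (QuotientAddGroup.mk (ρ' q) : G ⧸ H) = QuotientAddGroup.mk (ρ q) := by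
      rw [hρ, hρ']
    exact (QuotientAddGroup.eq_iff_sub_mem).mp this
  have heq : matHRing 𝒜 H ρ hA = matHRing 𝒜 H ρ' hA := by
    have hcp : ∀ i j : G ⧸ H,
        cosetPiece 𝒜 H (ρ i - ρ j) = cosetPiece 𝒜 H (ρ' i - ρ' j) := by
      intro i j
      refine cosetPiece_congr 𝒜 H ?_
      have : ρ' i - ρ' j - (ρ i - ρ j) = (ρ' i - ρ i) - (ρ' j - ρ j) := by abel
      rw [this]
      exact sub_mem (hmem i) (hmem j)
    apply SetLike.coe_injective
    ext m
    constructor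
    · intro hm i j; rw [← hcp]; exact hm i j
    · intro hm i j; rw [hcp]; exact hm i j
  exact ⟨RingEquiv.subringCongr heq⟩
end

section
/- Let p = (p_1, …, p_n) be positive integers and L = L(p) the abelian group with generators x_1, …, x_n, c and relations p_i x_i = c for 1 ≤ i ≤ n. Then every element of L can be written uniquely in the form Σ_{i=1}^n a_i x_i + ℓ c with integers 0 ≤ a_i ≤ p_i − 1 and ℓ ∈ Z. Equivalently, {Σ_{i=1}^n a_i x_i : 0 ≤ a_i ≤ p_i − 1} is a complete set of representatives of the cosets of Zc in L. -/
/-!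
Since `p i • x i = c`, a coefficient `b i` of `x i` may be replaced by `b i % p i` at the cost of
adding `b i / p i` to the coefficient of `c`; as `L` is a quotient of the free abelian group on
the `x i` and `c`, this gives existence. For uniqueness, the homomorphism `L → ∏ ZMod (p i)`,
`x i ↦ eᵢ`, `c ↦ 0` recovers the `a i`, and `L → ℚ`, `x i ↦ 1 / p i`, `c ↦ 1` shows that `c`
has infinite order.
-/

/-- The relations subgroup: generated by `p i • x i - c`. -/
def GLrel (n : ℕ) (p : Fin n → ℕ) : AddSubgroup (FreeAbelianGroup (Fin n ⊕ Unit)) :=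
  AddSubgroup.closure
    (Set.range fun i : Fin n =>
      (p i : ℤ) • FreeAbelianGroup.of (Sum.inl i) - FreeAbelianGroup.of (Sum.inr ()))

/-- The abelian group `L(p)` with generators `x_1, …, x_n, c` and relations `p_i x_i = c`. -/
def GLgroup (n : ℕ) (p : Fin n → ℕ) : Type :=
  FreeAbelianGroup (Fin n ⊕ Unit) ⧸ GLrel n p

instance (n : ℕ) (p : Fin n → ℕ) : AddCommGroup (GLgroup n p) :=
  QuotientAddGroup.Quotient.addCommGroup _

/-- The generator `x i` of `L(p)`. -/
def GLx (n : ℕ) (p : Fin n → ℕ) (i : Fin n) : GLgroup n p :=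
  QuotientAddGroup.mk (FreeAbelianGroup.of (Sum.inl i))

/-- The generator `c` of `L(p)`. -/
def GLc (n : ℕ) (p : Fin n → ℕ) : GLgroup n p :=
  QuotientAddGroup.mk (FreeAbelianGroup.of (Sum.inr ()))

open Finset

section Reduction

variable {ι A : Type*} [Fintype ι] [AddCommGroup A] {p : ι → ℕ} {y : ι → A} {d : A}

theorem zsmul_eq_emod_add_ediv {q : ℕ} {x : A} (hx : (q : ℤ) • x = d) (hq : q ≠ 0) (t : ℤ) :
    t • x = (t % q).toNat • x + (t / q) • d := by
  rw [← hx, smul_smul, ← natCast_zsmul, ← add_zsmul,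
    Int.toNat_of_nonneg (Int.emod_nonneg t (by exact_mod_cast hq)), Int.emod_add_ediv_mul]

theorem exists_bounded_sum_nsmul_add_zsmul_eq (h : ∀ i, (p i : ℤ) • y i = d) (hp : ∀ i, p i ≠ 0)
    (b : ι → ℤ) (m : ℤ) :
    ∃ (a : ι → ℕ) (l : ℤ), (∀ i, a i < p i) ∧
      ∑ i, b i • y i + m • d = ∑ i, a i • y i + l • d := by
  refine ⟨fun i => (b i % p i).toNat, m + ∑ i, b i / p i, fun i => ?_, ?_⟩
  · have := Int.emod_lt_of_pos (b i) (by exact_mod_cast (hp i).bot_lt : (0 : ℤ) < p i)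
    have := hp i
    dsimp only
    omega
  · simp only [fun i => zsmul_eq_emod_add_ediv (h i) (hp i) (b i), sum_add_distrib,
      ← sum_smul, add_zsmul]
    abel

end Reduction

namespace GLgroup

variable {n : ℕ} {p : Fin n → ℕ}

theorem zsmul_GLx_eq_GLc (i : Fin n) : (p i : ℤ) • GLx n p i = GLc n p := by
  have := (QuotientAddGroup.eq_zero_iff _).2 (AddSubgroup.subset_closure ⟨i, rfl⟩ :
    (p i : ℤ) • FreeAbelianGroup.of (Sum.inl i) - FreeAbelianGroup.of (Sum.inr ()) ∈ GLrel n p)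
  rwa [QuotientAddGroup.mk_sub, QuotientAddGroup.mk_zsmul, sub_eq_zero] at this

section Lift

variable {A : Type*} [AddCommGroup A] {y : Fin n → A} {d : A}

def lift (y : Fin n → A) (d : A) (h : ∀ i, (p i : ℤ) • y i = d) : GLgroup n p →+ A :=
  QuotientAddGroup.lift _ (FreeAbelianGroup.lift (Sum.elim y fun _ => d)) <| by
    rw [GLrel, AddSubgroup.closure_le]
    rintro _ ⟨i, rfl⟩
    simp only [SetLike.mem_coe, AddMonoidHom.mem_ker, map_sub, map_zsmul,
      FreeAbelianGroup.lift_apply_of, Sum.elim_inl, Sum.elim_inr, h, sub_self]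

@[simp]
theorem lift_GLx (h : ∀ i, (p i : ℤ) • y i = d) (i : Fin n) : lift y d h (GLx n p i) = y i :=
  FreeAbelianGroup.lift_apply_of _ _

@[simp]
theorem lift_GLc (h : ∀ i, (p i : ℤ) • y i = d) : lift y d h (GLc n p) = d :=
  FreeAbelianGroup.lift_apply_of _ _

end Lift

theorem exists_eq_sum_zsmul_add_zsmul (z : GLgroup n p) :
    ∃ (b : Fin n → ℤ) (m : ℤ), z = ∑ i, b i • GLx n p i + m • GLc n p := by
  let comb : (Fin n → ℤ) × ℤ →+ GLgroup n p :=
    { toFun := fun w => ∑ i, w.1 i • GLx n p i + w.2 • GLc n p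
      map_zero' := by simp
      map_add' := fun w w' => by
        simp only [Prod.fst_add, Prod.snd_add, Pi.add_apply, add_zsmul, sum_add_distrib]
        abel }
  let coords : FreeAbelianGroup (Fin n ⊕ Unit) →+ (Fin n → ℤ) × ℤ :=
    FreeAbelianGroup.lift (Sum.elim (fun i => (Pi.single i 1, 0)) fun _ => (0, 1))
  have hcomp : comb.comp coords = QuotientAddGroup.mk' (GLrel n p) := by
    refine FreeAbelianGroup.lift_ext _ _ fun x => ?_
    rcases x with i | ⟨⟨⟩⟩
    · change _ = GLx n p i
      simp [comb, coords, Pi.single_apply]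
    · change _ = GLc n p
      simp [comb, coords]
  obtain ⟨f, rfl⟩ := QuotientAddGroup.mk'_surjective (GLrel n p) z
  exact ⟨_, _, (DFunLike.congr_fun hcomp f).symm⟩

def residues : GLgroup n p →+ ∀ i, ZMod (p i) :=
  lift (fun i => Pi.single i 1) 0 fun i => by
    rw [← Pi.single_smul, zsmul_one, Int.cast_natCast, ZMod.natCast_self, Pi.single_zero]

theorem residues_sum_nsmul_add_zsmul (a : Fin n → ℕ) (l : ℤ) :
    residues (∑ i, a i • GLx n p i + l • GLc n p) = fun j => (a j : ZMod (p j)) := by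
  ext j
  simp [residues, ← Pi.single_smul]

def toRat (hp : ∀ i, p i ≠ 0) : GLgroup n p →+ ℚ :=
  lift (fun i => (p i : ℚ)⁻¹) 1 fun i => by
    rw [zsmul_eq_mul, Int.cast_natCast, mul_inv_cancel₀ (by exact_mod_cast hp i)]

theorem zsmul_GLc_injective (hp : ∀ i, p i ≠ 0) : Function.Injective (· • GLc n p : ℤ → _) :=
  fun l l' h => by simpa [toRat] using congrArg (toRat hp) h

theorem eq_of_sum_nsmul_add_zsmul_eq (hp : ∀ i, p i ≠ 0) {a a' : Fin n → ℕ} {l l' : ℤ}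
    (ha : ∀ i, a i < p i) (ha' : ∀ i, a' i < p i)
    (h : ∑ i, a i • GLx n p i + l • GLc n p = ∑ i, a' i • GLx n p i + l' • GLc n p) :
    a = a' ∧ l = l' := by
  have hres := congrArg residues h
  simp only [residues_sum_nsmul_add_zsmul, funext_iff, ZMod.natCast_eq_natCast_iff',
    Nat.mod_eq_of_lt (ha _), Nat.mod_eq_of_lt (ha' _)] at hres
  obtain rfl : a = a' := funext hres
  exact ⟨rfl, zsmul_GLc_injective hp (add_left_cancel h)⟩

end GLgroup

/-- **Statement 13.** Every element of `L(p)` can be written uniquely as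
`∑ a_i x_i + ℓ c` with `0 ≤ a_i ≤ p_i − 1` and `ℓ ∈ ℤ` (equivalently, the elements
`∑ a_i x_i` with `0 ≤ a_i < p_i` form a complete set of representatives of the cosets
of `ℤc` in `L`). -/
theorem statement_13 (n : ℕ) (p : Fin n → ℕ) (hp : ∀ i, 0 < p i) (z : GLgroup n p) :
    ∃! w : (Fin n → ℕ) × ℤ, (∀ i, w.1 i < p i) ∧
      z = (∑ i, w.1 i • GLx n p i) + w.2 • GLc n p := by
  have hp₀ : ∀ i, p i ≠ 0 := fun i => (hp i).ne'
  obtain ⟨b, m, rfl⟩ := GLgroup.exists_eq_sum_zsmul_add_zsmul z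
  obtain ⟨a, l, ha, hz⟩ := exists_bounded_sum_nsmul_add_zsmul_eq GLgroup.zsmul_GLx_eq_GLc hp₀ b m
  refine ⟨(a, l), ⟨ha, hz⟩, fun w ⟨hw, hwz⟩ => ?_⟩
  obtain ⟨h₁, h₂⟩ := GLgroup.eq_of_sum_nsmul_add_zsmul_eq hp₀ hw ha (hwz.symm.trans hz)
  exact Prod.ext h₁ h₂
end

section
/- Let p = (p_1, …, p_n) be positive integers, L = L(p) the abelian group with generators x_1, …, x_n, c and relations p_i x_i = c, and L_+ the submonoid of L generated by x_1, …, x_n. Then L_+ ∩ (−L_+) = {0}; consequently the relation defined by x ≤ y if and only if y − x ∈ L_+ is a partial order on L. -/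
/-- The submonoid `L_+` of `L(p)` generated by `x_1, …, x_n`. -/
def GLplus (n : ℕ) (p : Fin n → ℕ) : AddSubmonoid (GLgroup n p) :=
  AddSubmonoid.closure (Set.range (GLx n p))

/-!
Weigh `x_i` by `1 / p_i` and `c` by `1`: this respects the relations `p_i x_i = c`, so it defines
an additive map `L(p) → ℚ` that is strictly positive on the generators of `L_+`. Hence every element
of `L_+` has nonnegative weight, and weight zero only if it is `0`; an element of `L_+ ∩ (−L_+)` has
weight both `≥ 0` and `≤ 0`, so it vanishes.
-/

namespace AddSubmonoid

section

variable {M R : Type*} [AddMonoid M] [AddCommMonoid R] [PartialOrder R] [IsOrderedAddMonoid R]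
  {s : Set M} {φ : M →+ R}

theorem map_nonneg_of_mem_closure (hφ : ∀ x ∈ s, 0 < φ x) {z : M} (hz : z ∈ closure s) :
    0 ≤ φ z := by
  induction hz using closure_induction with
  | mem x hx => exact (hφ x hx).le
  | zero => simp
  | add a b _ _ ha hb => simpa only [map_add] using add_nonneg ha hb

theorem eq_zero_of_mem_closure_of_map_eq_zero (hφ : ∀ x ∈ s, 0 < φ x) {z : M}
    (hz : z ∈ closure s) (h0 : φ z = 0) : z = 0 := by
  induction hz using closure_induction with
  | mem x hx => exact absurd h0 (hφ x hx).ne'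
  | zero => rfl
  | add a b ha hb iha ihb =>
    rw [map_add] at h0
    obtain ⟨ha0, hb0⟩ :=
      (add_eq_zero_iff_of_nonneg (map_nonneg_of_mem_closure hφ ha)
        (map_nonneg_of_mem_closure hφ hb)).mp h0
    rw [iha ha0, ihb hb0, add_zero]

end

theorem eq_zero_of_mem_closure_of_neg_mem {G R : Type*} [AddGroup G]
    [AddCommGroup R] [PartialOrder R] [IsOrderedAddMonoid R] {s : Set G} {φ : G →+ R}
    (hφ : ∀ x ∈ s, 0 < φ x) {z : G} (hz : z ∈ closure s) (hz' : -z ∈ closure s) : z = 0 := by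
  have hneg : 0 ≤ -φ z := by simpa only [map_neg] using map_nonneg_of_mem_closure hφ hz'
  exact eq_zero_of_mem_closure_of_map_eq_zero hφ hz
    (le_antisymm (neg_nonneg.mp hneg) (map_nonneg_of_mem_closure hφ hz))

theorem isPartialOrder_sub_mem {G : Type*} [AddGroup G] (S : AddSubmonoid G)
    (hS : ∀ z ∈ S, -z ∈ S → z = 0) : IsPartialOrder G (fun x y => y - x ∈ S) where
  refl x := by simpa only [sub_self] using S.zero_mem
  trans x y z hxy hyz := by simpa only [sub_add_sub_cancel] using S.add_mem hyz hxy
  antisymm x y hxy hyx := (sub_eq_zero.mp (hS _ hxy (by rwa [neg_sub]))).symm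

end AddSubmonoid

noncomputable def GLweight (n : ℕ) (p : Fin n → ℕ) (hp : ∀ i, 0 < p i) : GLgroup n p →+ ℚ :=
  QuotientAddGroup.lift (GLrel n p)
    (FreeAbelianGroup.lift (Sum.elim (fun i => ((p i : ℚ))⁻¹) (fun _ => 1))) <| by
      rw [GLrel, AddSubgroup.closure_le]
      rintro _ ⟨i, rfl⟩
      have hpi : (p i : ℚ) ≠ 0 := Nat.cast_ne_zero.mpr (hp i).ne'
      simp [mul_inv_cancel₀ hpi]

theorem GLweight_x (n : ℕ) (p : Fin n → ℕ) (hp : ∀ i, 0 < p i) (i : Fin n) :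
    GLweight n p hp (GLx n p i) = (p i : ℚ)⁻¹ :=
  (QuotientAddGroup.lift_mk _ _ _).trans (by simp)

/-- **Statement 14.** `L_+ ∩ (−L_+) = {0}`; consequently the relation
`x ≤ y ↔ y − x ∈ L_+` is a partial order on `L(p)`. -/
theorem statement_14 (n : ℕ) (p : Fin n → ℕ) (hp : ∀ i, 0 < p i) :
    (∀ z : GLgroup n p, z ∈ GLplus n p → -z ∈ GLplus n p → z = 0) ∧
    IsPartialOrder (GLgroup n p) (fun x y => y - x ∈ GLplus n p) := by
  have hpos : ∀ x ∈ Set.range (GLx n p), 0 < GLweight n p hp x := by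
    rintro _ ⟨i, rfl⟩
    rw [GLweight_x]
    exact inv_pos.mpr (Nat.cast_pos.mpr (hp i))
  have hpointed : ∀ z ∈ GLplus n p, -z ∈ GLplus n p → z = 0 := fun _ hz hz' =>
    AddSubmonoid.eq_zero_of_mem_closure_of_neg_mem hpos hz hz'
  exact ⟨hpointed, (GLplus n p).isPartialOrder_sub_mem hpointed⟩
end
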